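/- arXiv:2107.05629 — 2 statements merged into one kernel-verified Lean document; each statement's English description precedes it below -/
import Mathlib

section
/- For every integer n, every natural number k, and every positive integer N, the integers T^k(N) and F_n^k(N + A_n) have opposite parities: T^k(N) is even if and only if F_n^k(N + A_n) is odd. -/
def T (N : ℤ) : ℤ := if Even N then N / 2 else (3 * N + 1) / 2

def F (n : ℤ) (P : ℤ) : ℤ := if Even P then (3 * P - 2 * n) / 2 else (P + 2 * n + 1) / 2

def A (n : ℤ) : ℤ := 2 * n + 1

lemma F_step (n Q : ℤ) : F n (Q + A n) = T Q + A n := by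
  unfold F T A
  rcases Int.even_or_odd Q with ⟨m, hm⟩ | ⟨m, hm⟩ <;> subst hm
  · rw [if_neg (show ¬ Even (m + m + (2 * n + 1)) by simp [Int.even_iff]; omega),
      if_pos (show Even (m + m) from ⟨m, rfl⟩)]
    omega
  · rw [if_pos (show Even (2 * m + 1 + (2 * n + 1)) by simp [Int.even_iff]; omega),
      if_neg (show ¬ Even (2 * m + 1) by simp [Int.even_iff])]
    omega

lemma F_iter (n : ℤ) (k : ℕ) (Q : ℤ) : (F n)^[k] (Q + A n) = T^[k] Q + A n := by
  induction k with
  | zero => simp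
  | succ k ih =>
    rw [Function.iterate_succ_apply', Function.iterate_succ_apply', ih, F_step]

theorem stmt_9 (n : ℤ) (k : ℕ) (N : ℤ) (hN : 0 < N) :
    Even (T^[k] N) ↔ Odd ((F n)^[k] (N + A n)) := by
  rw [F_iter]
  simp [A, Int.even_iff, Int.odd_iff]
  omega
end

section
/- For all integers n and m, every natural number k, and every positive integer N, one has F_n^k(N + A_n) = 2(n - m) + F_m^k(N + A_m), where A_n = 2n + 1. -/
def G (P : ℤ) : ℤ := if Even P then 3 * P / 2 else (P + 1) / 2

lemma F_shift (n x : ℤ) : F n (x + 2 * n) = G x + 2 * n := by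
  unfold F G
  have hpar : Even (x + 2 * n) ↔ Even x := by
    rw [Int.even_iff, Int.even_iff]; omega
  by_cases h : Even x
  · rw [if_pos (hpar.mpr h), if_pos h]
    obtain ⟨c, hc⟩ := h
    omega
  · rw [if_neg (fun hh => h (hpar.mp hh)), if_neg h]
    rw [Int.not_even_iff_odd] at h
    obtain ⟨c, hc⟩ := h
    omega

lemma iter_shift (n : ℤ) (k : ℕ) (x : ℤ) :
    (F n)^[k] (x + 2 * n) = G^[k] x + 2 * n := by
  induction k generalizing x with
  | zero => simp
  | succ k ih =>
    rw [Function.iterate_succ_apply, Function.iterate_succ_apply, F_shift, ih]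

theorem stmt_18 (n m : ℤ) (k : ℕ) (N : ℤ) (hN : 0 < N) :
    (F n)^[k] (N + A n) = 2 * (n - m) + (F m)^[k] (N + A m) := by
  have h1 : N + A n = (N + 1) + 2 * n := by unfold A; ring
  have h2 : N + A m = (N + 1) + 2 * m := by unfold A; ring
  rw [h1, h2, iter_shift, iter_shift]
  ring
end
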